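/- Let T be a smooth projective curve, E a vector bundle on T, and A an ample line bundle on T. Suppose r is the smallest positive integer such that E ⊗ A^{rq−1} is nef, and suppose that whenever Sym^N(E ⊗ A^{rq}) is globally generated for some N, it follows that E ⊗ A^{r(q−1)} is nef (for a fixed integer q ≥ 2). Then r ≤ q, and consequently E ⊗ A^{q²−1} is nef. -/
import Mathlib

/-- Bootstrap argument in the semipositivity proof: let `E` be a vector bundle
and `A` an ample line bundle on a smooth projective curve, `q ≥ 2`. Encode by
`Nef m` the nefness of `E ⊗ A^m` and by `GG m N` the global generation of
`Sym^N (E ⊗ A^m)`. Twisting a nef bundle by further powers of `A` preserves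
nefness, and a nef bundle twisted by `A` has some globally generated symmetric
power. If `r` is the smallest positive integer with `E ⊗ A^{rq−1}` nef, and
whenever some `Sym^N(E ⊗ A^{rq})` is globally generated it follows that
`E ⊗ A^{r(q−1)}` is nef, then `r ≤ q` and consequently `E ⊗ A^{q²−1}` is nef. -/
theorem stmt_15 (q : ℤ) (hq : 2 ≤ q)
    (Nef : ℤ → Prop) (GG : ℤ → ℕ → Prop)
    (hmono : ∀ m m' : ℤ, m ≤ m' → Nef m → Nef m')
    (hgen : ∀ m : ℤ, Nef (m - 1) → ∃ N : ℕ, 0 < N ∧ GG m N)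
    (r : ℤ) (hr : 0 < r) (hrnef : Nef (r * q - 1))
    (hrmin : ∀ r' : ℤ, 0 < r' → Nef (r' * q - 1) → r ≤ r')
    (hboot : (∃ N : ℕ, GG (r * q) N) → Nef (r * (q - 1))) :
    r ≤ q ∧ Nef (q ^ 2 - 1) := by
  obtain ⟨N, hN, hGG⟩ := hgen (r * q) hrnef
  have hnef' : Nef (r * (q - 1)) := hboot ⟨N, hGG⟩
  have hrq : r ≤ q := by
    by_contra h
    push_neg at h
    have h1 : r * (q - 1) ≤ (r - 1) * q - 1 := by nlinarith
    have := hrmin (r - 1) (by linarith) (hmono _ _ h1 hnef')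
    linarith
  exact ⟨hrq, hmono _ _ (by nlinarith) hrnef⟩
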